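/- arXiv:2302.05902 — 2 statements merged into one kernel-verified Lean document; each statement's English description precedes it below -/
import Mathlib

section
/- Let N ≥ 5, ω = exp(2πi/N), and define ξ_{ij} ∈ ℂ^N as above and set v_{ij} = |ξ_{ij}⟩⟨ξ_{ij}| ∈ M_N(ℂ). Then v = (v_{ij}) is a magic unitary: each v_{ij} is an orthogonal projection and for each i, Σ_j v_{ij} = 1, and for each j, Σ_i v_{ij} = 1. -/
/-!
`√N · ξ_{ij}(p) = ω ^ (ρ(p) (i - 1) - σ(p) (j - 1))`, where `ρ = rowSlope` and `σ = colSlope` are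
bijections onto the residues mod `N`. So for fixed `i` the vectors `ξ_{ij}` are, up to a diagonal
unitary and a permutation of coordinates, the discrete Fourier basis, and likewise for fixed `j`;
the rank-one projections onto an orthonormal basis sum to `1`. Each `v_{ij}` is the projection onto
a unit vector, hence a self-adjoint idempotent.
-/

open Complex Matrix

/-- `ω = exp(2πi/N)`. -/
noncomputable def omegaN (N : ℕ) : ℂ := Complex.exp (2 * Real.pi * Complex.I / N)

/-- The vector `ξ_{ij} ∈ ℂ^N`: coordinate `p` (for `p = 1, …, N`, encoded as `p : Fin N`
with value `p+1`) is `ω^{1-j}/√N` if `p = 1`, `ω^{i-1}/√N` if `p = N`,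
and `ω^{p(i-j)}/√N` otherwise. -/
noncomputable def xiVec (N : ℕ) (i j : ℤ) : EuclideanSpace ℂ (Fin N) :=
  WithLp.toLp 2 fun p =>
    if (p : ℕ) = 0 then omegaN N ^ (1 - j) / (Real.sqrt N : ℂ)
    else if (p : ℕ) = N - 1 then omegaN N ^ (i - 1) / (Real.sqrt N : ℂ)
    else omegaN N ^ ((((p : ℕ) : ℤ) + 1) * (i - j)) / (Real.sqrt N : ℂ)

/-- The matrix of the rank-one projection `|ξ_{ij}⟩⟨ξ_{ij}|` onto the span of `ξ_{ij}`:
`(v_{ij})_{pq} = ξ_{ij}(p) ⋅ conj (ξ_{ij}(q))`, so that `v_{ij} x = ⟨ξ_{ij}, x⟩ ξ_{ij}`. -/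
noncomputable def flatV (N : ℕ) (i j : Fin N) : Matrix (Fin N) (Fin N) ℂ :=
  Matrix.of fun p q =>
    xiVec N (((i : ℕ) : ℤ) + 1) (((j : ℕ) : ℤ) + 1) p *
      (starRingEnd ℂ) (xiVec N (((i : ℕ) : ℤ) + 1) (((j : ℕ) : ℤ) + 1) q)

theorem Matrix.isStarProjection_vecMulVec_star {n α : Type*} [Fintype n] [CommRing α] [StarRing α]
    (u : n → α) (hu : star u ⬝ᵥ u = 1) : IsStarProjection (vecMulVec u (star u)) where
  isIdempotentElem := by
    rw [IsIdempotentElem, vecMulVec_mul_vecMulVec, hu, one_smul]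
  isSelfAdjoint := by
    rw [IsSelfAdjoint, star_eq_conjTranspose, conjTranspose_vecMulVec, star_star]

theorem IsPrimitiveRoot.sum_zpow_add_mul_eq_zero {K : Type*} [Field K] {ζ : K} {N : ℕ}
    (hζ : IsPrimitiveRoot ζ N) (c : ℤ) {d : ℤ} (hd : ¬(N : ℤ) ∣ d) :
    ∑ t : Fin N, ζ ^ (c + d * t) = 0 := by
  rcases N.eq_zero_or_pos with rfl | hN
  · simp
  have hζ0 : ζ ≠ 0 := hζ.ne_zero hN.ne'
  have hd1 : ζ ^ d ≠ 1 := fun h => hd ((hζ.zpow_eq_one_iff_dvd d).1 h)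
  have hdN : (ζ ^ d) ^ N = 1 := by
    rw [← zpow_natCast, ← _root_.zpow_mul, mul_comm, _root_.zpow_mul, zpow_natCast, hζ.pow_eq_one,
      _root_.one_zpow]
  calc ∑ t : Fin N, ζ ^ (c + d * t) = ζ ^ c * ∑ t ∈ Finset.range N, (ζ ^ d) ^ t := by
        rw [Finset.mul_sum, ← Fin.sum_univ_eq_sum_range (fun t => ζ ^ c * (ζ ^ d) ^ t)]
        refine Finset.sum_congr rfl fun t _ => ?_
        rw [zpow_add₀ hζ0, ← zpow_natCast, ← _root_.zpow_mul]
    _ = 0 := by rw [geom_sum_eq hd1, hdN, sub_self, zero_div, mul_zero]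

theorem Int.natCast_not_dvd_sub_of_lt_of_ne {N a b : ℕ} (ha : a < N) (hb : b < N) (hab : a ≠ b) :
    ¬(N : ℤ) ∣ (a : ℤ) - b :=
  fun h => hab ((Nat.modEq_iff_dvd.2 h).eq_of_lt_of_lt hb ha).symm

theorem omegaN_isPrimitiveRoot {N : ℕ} (hN : N ≠ 0) : IsPrimitiveRoot (omegaN N) N :=
  Complex.isPrimitiveRoot_exp N hN

theorem omegaN_ne_zero (N : ℕ) : omegaN N ≠ 0 := Complex.exp_ne_zero _

theorem conj_omegaN_zpow (N : ℕ) (b : ℤ) : starRingEnd ℂ (omegaN N ^ b) = omegaN N ^ (-b) := by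
  rw [map_zpow₀, _root_.zpow_neg, ← _root_.inv_zpow, omegaN, ← Complex.exp_conj, ← Complex.exp_neg]
  congr 2
  simp [map_div₀, Complex.conj_ofReal, map_ofNat]
  ring

def rowSlope (N : ℕ) (p : Fin N) : ℕ :=
  if (p : ℕ) = 0 then 0 else if (p : ℕ) = N - 1 then 1 else p + 1

def colSlope (N : ℕ) (p : Fin N) : ℕ :=
  if (p : ℕ) = 0 then 1 else if (p : ℕ) = N - 1 then 0 else p + 1

theorem rowSlope_sub_not_dvd {N : ℕ} {p q : Fin N} (hpq : p ≠ q) :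
    ¬(N : ℤ) ∣ (rowSlope N p : ℤ) - rowSlope N q := by
  rw [Ne, Fin.ext_iff] at hpq
  apply Int.natCast_not_dvd_sub_of_lt_of_ne <;> unfold rowSlope <;> split_ifs <;> omega

theorem colSlope_sub_not_dvd {N : ℕ} {p q : Fin N} (hpq : p ≠ q) :
    ¬(N : ℤ) ∣ (colSlope N p : ℤ) - colSlope N q := by
  rw [Ne, Fin.ext_iff] at hpq
  apply Int.natCast_not_dvd_sub_of_lt_of_ne <;> unfold colSlope <;> split_ifs <;> omega

theorem xiVec_apply (N : ℕ) (i j : ℤ) (p : Fin N) :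
    xiVec N i j p = omegaN N ^ (rowSlope N p * (i - 1) - colSlope N p * (j - 1)) / Real.sqrt N := by
  simp only [xiVec, rowSlope, colSlope]
  split_ifs <;> push_cast <;> ring_nf

theorem flatV_apply (N : ℕ) (i j p q : Fin N) :
    flatV N i j p q = omegaN N ^ (((rowSlope N p : ℤ) - rowSlope N q) * i
      + ((colSlope N q : ℤ) - colSlope N p) * j) / N := by
  rw [flatV, of_apply, xiVec_apply, xiVec_apply, map_div₀, conj_omegaN_zpow, Complex.conj_ofReal,
    div_mul_div_comm, ← zpow_add₀ (omegaN_ne_zero N), ← Complex.ofReal_mul,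
    Real.mul_self_sqrt (Nat.cast_nonneg N), Complex.ofReal_natCast]
  ring_nf

theorem flatV_apply_self (N : ℕ) (i j p : Fin N) : flatV N i j p p = (N : ℂ)⁻¹ := by
  simp [flatV_apply]

theorem flatV_eq_vecMulVec (N : ℕ) (i j : Fin N) :
    flatV N i j = vecMulVec ⇑(xiVec N (i + 1) (j + 1)) (star ⇑(xiVec N (i + 1) (j + 1))) :=
  rfl

theorem isStarProjection_flatV (N : ℕ) (i j : Fin N) : IsStarProjection (flatV N i j) := by
  have : NeZero N := ⟨i.pos.ne'⟩
  rw [flatV_eq_vecMulVec]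
  refine isStarProjection_vecMulVec_star _ ?_
  calc star ⇑(xiVec N (i + 1) (j + 1)) ⬝ᵥ ⇑(xiVec N (i + 1) (j + 1))
      = ∑ p, flatV N i j p p := Finset.sum_congr rfl fun p _ => mul_comm _ _
    _ = 1 := by simp [flatV_apply_self]

theorem sum_flatV_row_eq_one (N : ℕ) (i : Fin N) : ∑ j, flatV N i j = 1 := by
  ext p q
  have : NeZero N := ⟨p.pos.ne'⟩
  rw [Matrix.sum_apply, one_apply]
  split_ifs with hpq
  · simp [hpq, flatV_apply_self]
  · simp only [flatV_apply, ← Finset.sum_div]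
    rw [(omegaN_isPrimitiveRoot (NeZero.ne N)).sum_zpow_add_mul_eq_zero _
      (colSlope_sub_not_dvd (Ne.symm hpq)), zero_div]

theorem sum_flatV_col_eq_one (N : ℕ) (j : Fin N) : ∑ i, flatV N i j = 1 := by
  ext p q
  have : NeZero N := ⟨p.pos.ne'⟩
  rw [Matrix.sum_apply, one_apply]
  split_ifs with hpq
  · simp [hpq, flatV_apply_self]
  · simp only [flatV_apply, add_comm, ← Finset.sum_div]
    rw [(omegaN_isPrimitiveRoot (NeZero.ne N)).sum_zpow_add_mul_eq_zero _
      (rowSlope_sub_not_dvd hpq), zero_div]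

theorem flatV_magic_unitary_general (N : ℕ) :
    (∀ i j : Fin N, (flatV N i j)ᴴ = flatV N i j ∧ flatV N i j * flatV N i j = flatV N i j)
    ∧ (∀ i : Fin N, ∑ j, flatV N i j = 1)
    ∧ (∀ j : Fin N, ∑ i, flatV N i j = 1) :=
  ⟨fun i j => ⟨(isStarProjection_flatV N i j).isSelfAdjoint,
    (isStarProjection_flatV N i j).isIdempotentElem⟩, sum_flatV_row_eq_one N,
    sum_flatV_col_eq_one N⟩

theorem flatV_magic_unitary (N : ℕ) (hN : 5 ≤ N) :
    (∀ i j : Fin N, (flatV N i j)ᴴ = flatV N i j ∧ flatV N i j * flatV N i j = flatV N i j)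
    ∧ (∀ i : Fin N, ∑ j, flatV N i j = 1)
    ∧ (∀ j : Fin N, ∑ i, flatV N i j = 1) :=
  flatV_magic_unitary_general N
end

section
/- Let A be a unital C*-algebra with a magic unitary u ∈ M_N(A), N ≥ 4, and a faithful tracial state h that is invariant under relabeling by pairs of permutations of the row and column indices and satisfies h(u_{ij}) = 1/N, h(u_{ij}u_{kl}) = 1/(N(N−1)) for i≠k, j≠l, and h(u_{i_1j_1}u_{i_2j_2}u_{i_3j_3}) = 1/(N(N−1)(N−2)) for distinct rows and distinct columns. Setting α₂ = h(u_{11}u_{22}u_{11}u_{23}) and α₄ = h(u_{11}u_{22}u_{13}u_{24}), one has α₂ + (N−3)α₄ = 0. -/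
/-!
Entries in a common row or column of a magic unitary are orthogonal: if projections `vₗ` sum to
`1`, then `∑ₗ h((vₗvⱼ)⋆(vₗvⱼ)) = h(vⱼ)`, already attained by the term `l = j`, so the other
(nonnegative) terms vanish and faithfulness gives `vₗvⱼ = 0`.

Fix `u₁₁ u₂₂` and `u₂₄` and sum `h(u₁₁ u₂₂ u₁ⱼ u₂₄)` over the column `j`: the row sum collapses the
product to `u₁₁ u₂₂ u₂₄ = 0`. The terms `j = 2, 4` vanish by column orthogonality, the term `j = 1`
is `α₂` after swapping the columns `3, 4`, and each of the remaining `N - 3` terms is `α₄` after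
swapping the columns `j, 3`.
-/

open Finset
open scoped ComplexOrder

structure IsMagicUnitary {ι A : Type*} [Fintype ι] [Ring A] [Star A] (u : ι → ι → A) : Prop where
  isStarProjection : ∀ i j, IsStarProjection (u i j)
  sum_row : ∀ i, ∑ j, u i j = 1
  sum_col : ∀ j, ∑ i, u i j = 1

def RelabelInvariant {ι A F : Type*} [Monoid A] [FunLike F A ℂ] (h : F) (u : ι → ι → A) : Prop :=
  ∀ (n : ℕ) (is js : Fin n → ι) (σ τ : Equiv.Perm ι),
    h ((List.ofFn fun m => u (is m) (js m)).prod) =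
      h ((List.ofFn fun m => u (σ (is m)) (τ (js m))).prod)

theorem Fintype.sum_eq_add_add_add_card_sub_three_mul {ι R : Type*} [Fintype ι] [CommRing R]
    {f : ι → R} {a b c : ι} {y : R} (hab : a ≠ b) (hac : a ≠ c) (hbc : b ≠ c)
    (hf : ∀ j, j ≠ a → j ≠ b → j ≠ c → f j = y) :
    ∑ j, f j = f a + f b + f c + ((Fintype.card ι : R) - 3) * y := by
  classical
  set s : Finset ι := {a, b, c}
  have hs : s.card = 3 := card_eq_three.2 ⟨a, b, c, hab, hac, hbc, rfl⟩
  have hcompl : ∑ j ∈ sᶜ, f j = ((Fintype.card ι : R) - 3) * y := by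
    have hy : ∀ j ∈ sᶜ, f j = y := fun j hj => by
      simp only [s, mem_compl, mem_insert, mem_singleton, not_or] at hj
      exact hf j hj.1 hj.2.1 hj.2.2
    rw [Finset.sum_congr rfl hy, Finset.sum_const, Finset.card_compl, hs, nsmul_eq_mul,
      Nat.cast_sub (hs ▸ card_le_univ s)]
    norm_num
  rw [← sum_add_sum_compl s, hcompl, sum_insert (by simp [hab, hac]), sum_pair hbc]
  ring

section FaithfulPositive

variable {A F : Type*} [Ring A] [StarRing A] [FunLike F A ℂ] [AddMonoidHomClass F A ℂ] {h : F}

theorem IsStarProjection.mul_eq_zero_of_sum_eq_one {ι : Type*} [Fintype ι]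
    (h_pos : ∀ a, 0 ≤ h (star a * a)) (h_faithful : ∀ a, h (star a * a) = 0 → a = 0)
    {v : ι → A} (hv : ∀ i, IsStarProjection (v i)) (hsum : ∑ i, v i = 1) {i j : ι}
    (hij : i ≠ j) : v i * v j = 0 := by
  classical
  set g : ι → ℂ := fun l => h (star (v l * v j) * (v l * v j))
  have hg : ∀ l, g l = h (v j * v l * v j) := fun l => by
    simp only [g, star_mul, (hv j).isSelfAdjoint.star_eq, (hv l).isSelfAdjoint.star_eq]
    rw [← mul_assoc, mul_assoc (v j), (hv l).isIdempotentElem.eq]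
  have hsum_g : ∑ l, g l = g j := by
    simp only [hg, ← map_sum, ← sum_mul, ← mul_sum, hsum, mul_one, (hv j).isIdempotentElem.eq]
  have herase : ∑ l ∈ univ.erase j, g l = 0 := by
    linear_combination (add_sum_erase univ g (mem_univ j)).trans hsum_g
  exact h_faithful _ <| (sum_eq_zero_iff_of_nonneg fun l _ => h_pos _).1 herase i
    (mem_erase.2 ⟨hij, mem_univ i⟩)

variable {ι : Type*} [Fintype ι] {u : ι → ι → A}

theorem IsMagicUnitary.mul_eq_zero_of_ne_col (hu : IsMagicUnitary u)
    (h_pos : ∀ a, 0 ≤ h (star a * a)) (h_faithful : ∀ a, h (star a * a) = 0 → a = 0)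
    (i : ι) {j l : ι} (hjl : j ≠ l) : u i j * u i l = 0 :=
  IsStarProjection.mul_eq_zero_of_sum_eq_one h_pos h_faithful (hu.isStarProjection i)
    (hu.sum_row i) hjl

theorem IsMagicUnitary.mul_eq_zero_of_ne_row (hu : IsMagicUnitary u)
    (h_pos : ∀ a, 0 ≤ h (star a * a)) (h_faithful : ∀ a, h (star a * a) = 0 → a = 0)
    {i k : ι} (hik : i ≠ k) (j : ι) : u i j * u k j = 0 :=
  IsStarProjection.mul_eq_zero_of_sum_eq_one h_pos h_faithful (hu.isStarProjection · j)
    (hu.sum_col j) hik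

end FaithfulPositive

theorem RelabelInvariant.apply_mul_four {ι A F : Type*} [Monoid A] [FunLike F A ℂ] {h : F}
    {u : ι → ι → A} (hh : RelabelInvariant h u) (σ τ : Equiv.Perm ι)
    (i₁ i₂ i₃ i₄ j₁ j₂ j₃ j₄ : ι) :
    h (u i₁ j₁ * u i₂ j₂ * u i₃ j₃ * u i₄ j₄) =
      h (u (σ i₁) (τ j₁) * u (σ i₂) (τ j₂) * u (σ i₃) (τ j₃) * u (σ i₄) (τ j₄)) := by
  simpa [List.ofFn_succ, mul_assoc] using hh 4 ![i₁, i₂, i₃, i₄] ![j₁, j₂, j₃, j₄] σ τ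

theorem IsMagicUnitary.add_card_sub_three_mul_eq_zero {ι A F : Type*} [Fintype ι] [DecidableEq ι]
    [Ring A] [StarRing A] [FunLike F A ℂ] [AddMonoidHomClass F A ℂ] {h : F}
    {u : ι → ι → A} (hu : IsMagicUnitary u) (h_pos : ∀ a, 0 ≤ h (star a * a))
    (h_faithful : ∀ a, h (star a * a) = 0 → a = 0) (h_relabel : RelabelInvariant h u)
    {i₀ i₁ j₀ j₁ j₂ j₃ : ι} (hi : i₀ ≠ i₁) (h01 : j₀ ≠ j₁) (h02 : j₀ ≠ j₂) (h03 : j₀ ≠ j₃)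
    (h12 : j₁ ≠ j₂) (h13 : j₁ ≠ j₃) (h23 : j₂ ≠ j₃) :
    h (u i₀ j₀ * u i₁ j₁ * u i₀ j₀ * u i₁ j₂) +
      ((Fintype.card ι : ℂ) - 3) * h (u i₀ j₀ * u i₁ j₁ * u i₀ j₂ * u i₁ j₃) = 0 := by
  set f : ι → ℂ := fun j => h (u i₀ j₀ * u i₁ j₁ * u i₀ j * u i₁ j₃)
  have hsum : ∑ j, f j = 0 := by
    rw [← map_sum, ← sum_mul, ← mul_sum, hu.sum_row, mul_one, mul_assoc,
      hu.mul_eq_zero_of_ne_col h_pos h_faithful i₁ h13, mul_zero, map_zero]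
  have hf₀ : f j₀ = h (u i₀ j₀ * u i₁ j₁ * u i₀ j₀ * u i₁ j₂) := by
    simpa [Equiv.swap_apply_of_ne_of_ne, h02, h03, h12, h13] using
      h_relabel.apply_mul_four 1 (Equiv.swap j₂ j₃) i₀ i₁ i₀ i₁ j₀ j₁ j₀ j₃
  have hf₁ : f j₁ = 0 := by
    simp only [f, mul_assoc (u i₀ j₀), hu.mul_eq_zero_of_ne_row h_pos h_faithful hi.symm,
      mul_zero, zero_mul, map_zero]
  have hf₃ : f j₃ = 0 := by
    simp only [f, mul_assoc _ (u i₀ j₃), hu.mul_eq_zero_of_ne_row h_pos h_faithful hi,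
      mul_zero, map_zero]
  have hf : ∀ j, j ≠ j₀ → j ≠ j₁ → j ≠ j₃ → f j = h (u i₀ j₀ * u i₁ j₁ * u i₀ j₂ * u i₁ j₃) :=
    fun j hj₀ hj₁ hj₃ => by
      simpa [Equiv.swap_apply_of_ne_of_ne, hj₀.symm, hj₁.symm, hj₃.symm, h02, h12, h23.symm] using
        h_relabel.apply_mul_four 1 (Equiv.swap j j₂) i₀ i₁ i₀ i₁ j₀ j₁ j j₃
  rw [Fintype.sum_eq_add_add_add_card_sub_three_mul h01 h03 h13 hf, hf₀, hf₁, hf₃] at hsum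
  simpa using hsum

theorem haar_degree_four_relation
    {A : Type*} [NormedRing A] [StarRing A] [NormedAlgebra ℂ A]
    (N : ℕ) (hN : 4 ≤ N)
    (u : Fin N → Fin N → A)
    -- magic unitary: entries are projections, rows and columns sum to 1
    (hu_proj : ∀ i j, u i j * u i j = u i j ∧ star (u i j) = u i j)
    (hu_row : ∀ i, ∑ j, u i j = 1)
    (hu_col : ∀ j, ∑ i, u i j = 1)
    -- h is a faithful tracial state
    (h : A →ₗ[ℂ] ℂ)
    (h_pos : ∀ a, ∃ r : ℝ, 0 ≤ r ∧ h (star a * a) = r)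
    (h_faithful : ∀ a, h (star a * a) = 0 → a = 0)
    -- invariance under relabeling by pairs of permutations
    (h_relabel : ∀ (n : ℕ) (is js : Fin n → Fin N) (σ τ : Equiv.Perm (Fin N)),
      h ((List.ofFn fun m => u (is m) (js m)).prod) =
        h ((List.ofFn fun m => u (σ (is m)) (τ (js m))).prod)) :
    -- α₂ + (N - 3) α₄ = 0, where α₂ = h(u₁₁u₂₂u₁₁u₂₃) and α₄ = h(u₁₁u₂₂u₁₃u₂₄)
    h (u ⟨0, by omega⟩ ⟨0, by omega⟩ * u ⟨1, by omega⟩ ⟨1, by omega⟩ *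
        u ⟨0, by omega⟩ ⟨0, by omega⟩ * u ⟨1, by omega⟩ ⟨2, by omega⟩)
      + ((N : ℂ) - 3) *
        h (u ⟨0, by omega⟩ ⟨0, by omega⟩ * u ⟨1, by omega⟩ ⟨1, by omega⟩ *
            u ⟨0, by omega⟩ ⟨2, by omega⟩ * u ⟨1, by omega⟩ ⟨3, by omega⟩) = 0 := by
  have hu : IsMagicUnitary u :=
    ⟨fun i j => isStarProjection_iff'.2 (hu_proj i j), hu_row, hu_col⟩
  have h_nonneg : ∀ a, 0 ≤ h (star a * a) := fun a => by
    obtain ⟨r, hr, hr_eq⟩ := h_pos a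
    exact hr_eq ▸ Complex.zero_le_real.2 hr
  simpa using hu.add_card_sub_three_mul_eq_zero h_nonneg h_faithful h_relabel
    (by simp) (by simp) (by simp) (by simp) (by simp) (by simp) (by simp)
end
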